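/- arXiv:2603.04005 — 8 statements merged into one kernel-verified Lean document; each statement's English description precedes it below -/
import Mathlib

section
/- Fix t ≥ 1, ρ ∈ [0,1], a symmetric positive definite d×d real matrix Σ0, μ0 ∈ ℝ^d, and ž_t ∈ ℝ^d. Define the backward recursion z_t = ž_t and, for k = t−1, t−2, …, 0, z_k = (1/√α_{k+1}) ( z_{k+1} + (1/2)(2−ρ) β_{k+1} Σ_{k+1}^{-1} ( √(ᾱ_{k+1}) μ0 − z_{k+1} ) ). Then z_0 = A_t^ρ ž_t + B_t^ρ μ0, where A_t^ρ = √(ᾱ_t) Σ0 ( ∏_{i=0}^{t−1} ( I + (1/2) ρ (β_{i+1}/α_{i+1}) Σ_i^{-1} ) ) Σ_t^{-1} and B_t^ρ = (1/2)(2−ρ) ( ∑_{i=2}^{t} ᾱ_{i−1} β_i Σ0 ( ∏_{j=0}^{i−2} ( I + (1/2) ρ (β_{j+1}/α_{j+1}) Σ_j^{-1} ) ) Σ_{i−1}^{-1} Σ_i^{-1} + β_1 Σ_1^{-1} ). -/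
/-!
Writing `c = (2 - ρ) / 2`, the recursion is affine,
`z_k = A_k z_{k+1} + c β_{k+1} √ᾱ_k Σ_{k+1}⁻¹ μ0` with
`A_k = α_{k+1}^{-1/2} (I - c β_{k+1} Σ_{k+1}⁻¹)`, so unrolling it gives `z_0` as
`A_0 ⋯ A_{t-1} ž_t` plus a sum of partial products applied to `μ0`. Since
`Σ_{k+1} = α_{k+1} Σ_k + β_{k+1} I` and `1 - c = ρ / 2`, each step factors as
`A_k = √α_{k+1} Σ_k (I + ½ ρ (β_{k+1}/α_{k+1}) Σ_k⁻¹) Σ_{k+1}⁻¹`, and in a product of such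
factors every inner `Σ_k⁻¹ Σ_k` cancels: `A_0 ⋯ A_{n-1} = √ᾱ_n Σ_0 ∏_{i<n} (…) Σ_n⁻¹`.
No commutativity of the `Σ_k` is needed.
-/

open Matrix Finset

theorem Finset.sum_range_eq_add_sum_Icc_two_sub_one {M : Type*} [AddCommMonoid M] (f : ℕ → M)
    {t : ℕ} (ht : 1 ≤ t) : ∑ i ∈ range t, f i = f 0 + ∑ i ∈ Icc 2 t, f (i - 1) := by
  obtain ⟨s, rfl⟩ := Nat.exists_eq_add_of_le' ht
  rw [sum_range_succ', add_comm, ← Ico_add_one_right_eq_Icc, sum_Ico_eq_sum_range]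
  congr 1
  refine sum_congr (by simp) fun i _ => ?_
  congr 1; omega

theorem prod_mem_Ioc_zero_one {ι : Type*} {s : Finset ι} {f : ι → ℝ}
    (h : ∀ i ∈ s, f i ∈ Set.Ioc 0 1) : ∏ i ∈ s, f i ∈ Set.Ioc 0 1 :=
  ⟨prod_pos fun i hi => (h i hi).1, prod_le_one (fun i hi => (h i hi).1.le) fun i hi => (h i hi).2⟩

namespace Matrix

theorem PosDef.smul_add_one_sub_smul_one {n : Type*} [DecidableEq n] {S : Matrix n n ℝ}
    (hS : S.PosDef) {a : ℝ} (ha₀ : 0 < a) (ha₁ : a ≤ 1) : (a • S + (1 - a) • 1).PosDef :=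
  (hS.smul ha₀).add_posSemidef (PosSemidef.one.smul (sub_nonneg.2 ha₁))

variable {n : Type*} [Fintype n] [DecidableEq n]

theorem eq_list_prod_mulVec_add_sum_mulVec_of_backward_rec {R : Type*} [Semiring R]
    {A C : ℕ → Matrix n n R} {w : n → R} {z : ℕ → n → R} {t : ℕ}
    (h : ∀ k < t, z k = A k *ᵥ z (k + 1) + C k *ᵥ w) :
    z 0 = ((List.range t).map A).prod *ᵥ z t +
      (∑ i ∈ range t, ((List.range i).map A).prod * C i) *ᵥ w := by
  induction t with
  | zero => simp
  | succ t ih =>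
    rw [ih fun k hk => h k (hk.trans t.lt_succ_self), h t t.lt_succ_self, mulVec_add,
      mulVec_mulVec, mulVec_mulVec, sum_range_succ, add_mulVec, List.range_succ,
      List.map_append, List.prod_append, List.map_singleton, List.prod_singleton]
    abel

theorem inv_sqrt_smul_one_sub_smul_inv_eq {T T' : Matrix n n ℝ} {a b ρ : ℝ} (ha : 0 < a)
    (hT'_eq : T' = a • T + b • 1) (hT : IsUnit T.det) (hT' : IsUnit T'.det) :
    (√a)⁻¹ • (1 - ((1 / 2) * (2 - ρ) * b) • T'⁻¹) =
      √a • (T * (1 + ((1 / 2) * ρ * (b / a)) • T⁻¹) * T'⁻¹) := by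
  subst hT'_eq
  have key : (√a)⁻¹ • (a • T + b • 1 - ((1 / 2) * (2 - ρ) * b) • 1) =
      √a • (T + ((1 / 2) * ρ * (b / a)) • 1) := by
    have hs : √a ^ 2 = a := Real.sq_sqrt ha.le
    have : √a ≠ 0 := by positivity
    match_scalars
    · field_simp
      exact hs.symm
    · field_simp
      linear_combination (-(b * ρ)) * hs
  calc _ = ((√a)⁻¹ • (a • T + b • 1 - ((1 / 2) * (2 - ρ) * b) • 1)) *
        (a • T + b • 1)⁻¹ := by
        rw [smul_mul, sub_mul, mul_nonsing_inv _ hT', smul_mul, one_mul]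
    _ = _ := by rw [key, smul_mul, mul_add, mul_one, Matrix.mul_smul, mul_nonsing_inv _ hT]

end Matrix

namespace PFODE

variable {d : Type*} [Fintype d] [DecidableEq d] {ρ : ℝ} {β al alb : ℕ → ℝ}
  {S : ℕ → Matrix d d ℝ}

noncomputable def stepMatrix (ρ : ℝ) (β al : ℕ → ℝ) (S : ℕ → Matrix d d ℝ) (k : ℕ) :
    Matrix d d ℝ :=
  (√(al (k + 1)))⁻¹ • (1 - ((1 / 2) * (2 - ρ) * β (k + 1)) • (S (k + 1))⁻¹)

noncomputable def correctionFactor (ρ : ℝ) (β al : ℕ → ℝ) (S : ℕ → Matrix d d ℝ) (i : ℕ) :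
    Matrix d d ℝ :=
  1 + ((1 / 2) * ρ * (β (i + 1) / al (i + 1))) • (S i)⁻¹

theorem eq_stepMatrix_mulVec_add {μ0 : d → ℝ} {z : ℕ → d → ℝ} {k : ℕ}
    (hal : 0 < al (k + 1)) (halb : alb (k + 1) = alb k * al (k + 1))
    (hrec : z k = (√(al (k + 1)))⁻¹ • (z (k + 1) + ((1 / 2) * (2 - ρ) * β (k + 1)) •
      (S (k + 1))⁻¹ *ᵥ (√(alb (k + 1)) • μ0 - z (k + 1)))) :
    z k = stepMatrix ρ β al S k *ᵥ z (k + 1) +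
      (((1 / 2) * (2 - ρ) * β (k + 1) * √(alb k)) • (S (k + 1))⁻¹) *ᵥ μ0 := by
  have : √(al (k + 1)) ≠ 0 := by positivity
  rw [hrec, halb, Real.sqrt_mul' _ hal.le, stepMatrix]
  simp only [mulVec_smul, smul_mulVec, sub_mulVec, mulVec_sub, one_mulVec, smul_sub, smul_add,
    smul_smul]
  match_scalars <;> field_simp

theorem list_prod_stepMatrix {n : ℕ} (hal : ∀ k < n, 0 < al (k + 1)) (halb₀ : alb 0 = 1)
    (halb : ∀ k, alb (k + 1) = alb k * al (k + 1))
    (hS : ∀ k, S (k + 1) = al (k + 1) • S k + β (k + 1) • 1)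
    (hdet : ∀ k ≤ n, IsUnit (S k).det) :
    ((List.range n).map (stepMatrix ρ β al S)).prod =
      √(alb n) • (S 0 * ((List.range n).map (correctionFactor ρ β al S)).prod * (S n)⁻¹) := by
  induction n with
  | zero => simp [halb₀, mul_nonsing_inv _ (hdet 0 le_rfl)]
  | succ n ih =>
    rw [List.range_succ, List.map_append, List.prod_append, List.map_append, List.prod_append,
      ih (fun k hk => hal k (hk.trans n.lt_succ_self)) fun k hk => hdet k (hk.trans n.le_succ)]
    rw [List.map_singleton, List.prod_singleton, List.map_singleton, List.prod_singleton,
      stepMatrix, inv_sqrt_smul_one_sub_smul_inv_eq (hal n n.lt_succ_self) (hS n)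
      (hdet n n.le_succ) (hdet (n + 1) le_rfl), smul_mul, Matrix.mul_smul, smul_smul, halb,
      Real.sqrt_mul' _ (hal n n.lt_succ_self).le, correctionFactor]
    congr 1
    simp only [Matrix.mul_assoc]
    rw [← Matrix.mul_assoc (S n)⁻¹, nonsing_inv_mul _ (hdet n n.le_succ), Matrix.one_mul]

theorem sum_list_prod_stepMatrix_mul {t : ℕ} (ht : 1 ≤ t) (hal : ∀ k < t, 0 < al (k + 1))
    (halb₀ : alb 0 = 1) (halb : ∀ k, alb (k + 1) = alb k * al (k + 1))
    (halb_nonneg : ∀ k < t, 0 ≤ alb k)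
    (hS : ∀ k, S (k + 1) = al (k + 1) • S k + β (k + 1) • 1)
    (hdet : ∀ k ≤ t, IsUnit (S k).det) :
    ∑ i ∈ range t, ((List.range i).map (stepMatrix ρ β al S)).prod *
        (((1 / 2) * (2 - ρ) * β (i + 1) * √(alb i)) • (S (i + 1))⁻¹) =
      ((1 / 2) * (2 - ρ)) • (∑ i ∈ Icc 2 t, (alb (i - 1) * β i) •
          (S 0 * ((List.range (i - 1)).map (correctionFactor ρ β al S)).prod *
            (S (i - 1))⁻¹ * (S i)⁻¹) + β 1 • (S 1)⁻¹) := by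
  have hterm : ∀ i < t, ((List.range i).map (stepMatrix ρ β al S)).prod *
        (((1 / 2) * (2 - ρ) * β (i + 1) * √(alb i)) • (S (i + 1))⁻¹) =
      ((1 / 2) * (2 - ρ)) • (alb i * β (i + 1)) •
        (S 0 * ((List.range i).map (correctionFactor ρ β al S)).prod * (S i)⁻¹ *
          (S (i + 1))⁻¹) := by
    intro i hi
    rw [list_prod_stepMatrix (fun k hk => hal k (hk.trans hi)) halb₀ halb hS
      fun k hk => hdet k (hk.trans hi.le), smul_mul, Matrix.mul_smul, smul_smul, smul_smul]
    congr 1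
    linear_combination ((1 / 2) * (2 - ρ) * β (i + 1)) * Real.mul_self_sqrt (halb_nonneg i hi)
  rw [sum_congr rfl fun i hi => hterm i (mem_range.1 hi), ← smul_sum,
    sum_range_eq_add_sum_Icc_two_sub_one _ ht, add_comm]
  congr 2
  · refine sum_congr rfl fun i hi => ?_
    rw [Nat.sub_add_cancel (by linarith [(mem_Icc.1 hi).1])]
  · simp [halb₀, mul_nonsing_inv _ (hdet 0 (Nat.zero_le t))]

end PFODE

theorem stmt_0_general (d t : ℕ) (ht : 1 ≤ t)
    (ρ : ℝ)
    (β : ℕ → ℝ) (hβ : ∀ k, 1 ≤ k → k ≤ t → β k ∈ Set.Ioo (0:ℝ) 1)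
    (al : ℕ → ℝ) (hal : ∀ k, al k = 1 - β k)
    (alb : ℕ → ℝ) (halb : ∀ k, alb k = ∏ i ∈ Finset.Icc 1 k, al i)
    (S0 : Matrix (Fin d) (Fin d) ℝ) (hS0 : S0.PosDef)
    (S : ℕ → Matrix (Fin d) (Fin d) ℝ)
    (hS : ∀ k, S k = alb k • S0 + (1 - alb k) • (1 : Matrix (Fin d) (Fin d) ℝ))
    (μ0 zcheck : Fin d → ℝ)
    (z : ℕ → Fin d → ℝ) (hzt : z t = zcheck)
    (hrec : ∀ k, k < t →
      z k = (Real.sqrt (al (k+1)))⁻¹ •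
        (z (k+1) + ((1/2) * (2 - ρ) * β (k+1)) •
          (S (k+1))⁻¹.mulVec (Real.sqrt (alb (k+1)) • μ0 - z (k+1)))) :
    z 0 =
      (Real.sqrt (alb t) •
        (S0 *
          ((List.range t).map (fun i =>
            (1 : Matrix (Fin d) (Fin d) ℝ) +
              ((1/2) * ρ * (β (i+1) / al (i+1))) • (S i)⁻¹)).prod *
          (S t)⁻¹)).mulVec zcheck
      +
      (((1/2) * (2 - ρ)) •
        ((∑ i ∈ Finset.Icc 2 t, (alb (i-1) * β i) •
            (S0 *
              ((List.range (i-1)).map (fun j =>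
                (1 : Matrix (Fin d) (Fin d) ℝ) +
                  ((1/2) * ρ * (β (j+1) / al (j+1))) • (S j)⁻¹)).prod *
              (S (i-1))⁻¹ * (S i)⁻¹))
          + β 1 • (S 1)⁻¹)).mulVec μ0 := by
  have hal_mem : ∀ k, 1 ≤ k → k ≤ t → al k ∈ Set.Ioc 0 1 := fun k hk₁ hk₂ => by
    obtain ⟨hβ₀, hβ₁⟩ := hβ k hk₁ hk₂
    rw [hal]
    constructor <;> linarith
  have halb_mem : ∀ k ≤ t, alb k ∈ Set.Ioc 0 1 := fun k hk => halb k ▸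
    prod_mem_Ioc_zero_one fun i hi => hal_mem i (mem_Icc.1 hi).1 ((mem_Icc.1 hi).2.trans hk)
  have hal_pos : ∀ k < t, 0 < al (k + 1) := fun k hk =>
    (hal_mem (k + 1) (Nat.le_add_left 1 k) hk).1
  have halb_succ : ∀ k, alb (k + 1) = alb k * al (k + 1) := fun k => by
    rw [halb, halb, prod_Icc_succ_top (Nat.le_add_left 1 k)]
  have halb₀ : alb 0 = 1 := by simp [halb]
  have hS_succ : ∀ k, S (k + 1) = al (k + 1) • S k + β (k + 1) • 1 := fun k => by
    rw [hS, hS, halb_succ, hal]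
    module
  have hdet : ∀ k ≤ t, IsUnit (S k).det := fun k hk => by
    rw [← isUnit_iff_isUnit_det, hS]
    exact (hS0.smul_add_one_sub_smul_one (halb_mem k hk).1 (halb_mem k hk).2).isUnit
  have hS₀ : S 0 = S0 := by simp [hS, halb₀]
  rw [eq_list_prod_mulVec_add_sum_mulVec_of_backward_rec fun k hk =>
      PFODE.eq_stepMatrix_mulVec_add (hal_pos k hk) (halb_succ k) (hrec k hk),
    PFODE.list_prod_stepMatrix hal_pos halb₀ halb_succ hS_succ hdet,
    PFODE.sum_list_prod_stepMatrix_mul ht hal_pos halb₀ halb_succ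
      (fun k hk => (halb_mem k hk.le).1.le) hS_succ hdet, hS₀, hzt]
  rfl

/-- Score-scaled PF-ODE backward recursion: closed form of the endpoint `z 0` as
`A_t^ρ ž_t + B_t^ρ μ0`. -/
theorem stmt_0 (d t : ℕ) (hd : 1 ≤ d) (ht : 1 ≤ t)
    (ρ : ℝ) (hρ : ρ ∈ Set.Icc (0:ℝ) 1)
    (β : ℕ → ℝ) (hβ : ∀ k, 1 ≤ k → k ≤ t → β k ∈ Set.Ioo (0:ℝ) 1)
    (al : ℕ → ℝ) (hal : ∀ k, al k = 1 - β k)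
    (alb : ℕ → ℝ) (halb : ∀ k, alb k = ∏ i ∈ Finset.Icc 1 k, al i)
    (S0 : Matrix (Fin d) (Fin d) ℝ) (hS0 : S0.PosDef)
    (S : ℕ → Matrix (Fin d) (Fin d) ℝ)
    (hS : ∀ k, S k = alb k • S0 + (1 - alb k) • (1 : Matrix (Fin d) (Fin d) ℝ))
    (μ0 zcheck : Fin d → ℝ)
    (z : ℕ → Fin d → ℝ) (hzt : z t = zcheck)
    (hrec : ∀ k, k < t →
      z k = (Real.sqrt (al (k+1)))⁻¹ •
        (z (k+1) + ((1/2) * (2 - ρ) * β (k+1)) •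
          (S (k+1))⁻¹.mulVec (Real.sqrt (alb (k+1)) • μ0 - z (k+1)))) :
    z 0 =
      (Real.sqrt (alb t) •
        (S0 *
          ((List.range t).map (fun i =>
            (1 : Matrix (Fin d) (Fin d) ℝ) +
              ((1/2) * ρ * (β (i+1) / al (i+1))) • (S i)⁻¹)).prod *
          (S t)⁻¹)).mulVec zcheck
      +
      (((1/2) * (2 - ρ)) •
        ((∑ i ∈ Finset.Icc 2 t, (alb (i-1) * β i) •
            (S0 *
              ((List.range (i-1)).map (fun j =>
                (1 : Matrix (Fin d) (Fin d) ℝ) +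
                  ((1/2) * ρ * (β (j+1) / al (j+1))) • (S j)⁻¹)).prod *
              (S (i-1))⁻¹ * (S i)⁻¹))
          + β 1 • (S 1)⁻¹)).mulVec μ0 :=
  stmt_0_general d t ht ρ β hβ al hal alb halb S0 hS0 S hS μ0 zcheck z hzt hrec
end

section
/- Fix t ≥ 1, ρ ∈ [0,1], a symmetric positive definite d×d real matrix Σ0, and 0 ≤ k ≤ t−1. For 1 ≤ i ≤ t define U_i^ρ = √(α_i) ( Σ_{i−1} + (1/2) ρ (β_i/α_i) I ) Σ_i^{-1}. Then the product U_{k+1}^ρ U_{k+2}^ρ ⋯ U_t^ρ equals ( ∏_{i=k+1}^{t} √(α_i) ) ( Σ_k + (1/2) ρ (β_{k+1}/α_{k+1}) I ) ( ∏_{i=k+1}^{t−1} ( I + (1/2) ρ (β_{i+1}/α_{i+1}) Σ_i^{-1} ) ) Σ_t^{-1}. -/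
/-!
Regrouping the product `∏ √αᵢ (Σ_{i-1} + cᵢ I) Σᵢ⁻¹` so that each `Σᵢ⁻¹` meets the next factor
`Σᵢ + c_{i+1} I` turns every inner pair into `I + c_{i+1} Σᵢ⁻¹`; only the invertibility of the
`Σᵢ` is needed, which follows from `0 < ᾱᵢ ≤ 1` and positive definiteness of `Σ₀`.
-/

open Matrix

theorem List.prod_range_succ_map_mul {M : Type*} [Monoid M] (a b : ℕ → M) (n : ℕ) :
    ((List.range (n + 1)).map fun j => a j * b j).prod =
      a 0 * ((List.range n).map fun j => b j * a (j + 1)).prod * b n := by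
  induction n with
  | zero => simp
  | succ n ih =>
    rw [List.range_succ, List.map_append, List.prod_append, ih, List.range_succ,
      List.map_append, List.prod_append]
    simp only [List.map_cons, List.map_nil, List.prod_cons, List.prod_nil, mul_one, mul_assoc]

theorem List.prod_range_map_smul {R A : Type*} [CommMonoid R] [Monoid A] [MulAction R A]
    [IsScalarTower R A A] [SMulCommClass R A A] (r : ℕ → R) (x : ℕ → A) (n : ℕ) :
    ((List.range n).map fun j => r j • x j).prod =
      (∏ j ∈ Finset.range n, r j) • ((List.range n).map x).prod := by
  induction n with
  | zero => simp
  | succ n ih =>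
    simp only [List.range_succ, List.map_append, List.prod_append, ih, Finset.prod_range_succ,
      List.map_cons, List.map_nil, List.prod_cons, List.prod_nil, mul_one, smul_mul_smul_comm]

theorem Finset.prod_mem_Ioc {ι : Type*} {s : Finset ι} {f : ι → ℝ}
    (hf : ∀ i ∈ s, f i ∈ Set.Ioc 0 1) : ∏ i ∈ s, f i ∈ Set.Ioc 0 1 :=
  ⟨Finset.prod_pos fun i hi => (hf i hi).1,
    Finset.prod_le_one (fun i hi => (hf i hi).1.le) fun i hi => (hf i hi).2⟩

theorem Matrix.PosDef.smul_add_smul_one {n : Type*} [Fintype n] [DecidableEq n]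
    {A : Matrix n n ℝ} (hA : A.PosDef) {a b : ℝ} (ha : 0 < a) (hb : 0 ≤ b) :
    (a • A + b • (1 : Matrix n n ℝ)).PosDef :=
  (hA.smul ha).add_posSemidef (PosSemidef.one.smul hb)

theorem Matrix.inv_mul_add_smul_one {n α : Type*} [Fintype n] [DecidableEq n] [CommRing α]
    {A : Matrix n n α} (hA : IsUnit A.det) (c : α) :
    A⁻¹ * (A + c • (1 : Matrix n n α)) = 1 + c • A⁻¹ := by
  rw [mul_add, nonsing_inv_mul A hA, mul_smul_comm, mul_one]

theorem stmt_1_general (d t : ℕ) (ρ : ℝ)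
    (β : ℕ → ℝ) (hβ : ∀ i, 1 ≤ i → i ≤ t → β i ∈ Set.Ioo (0:ℝ) 1)
    (al : ℕ → ℝ) (hal : ∀ i, al i = 1 - β i)
    (alb : ℕ → ℝ) (halb : ∀ i, alb i = ∏ j ∈ Finset.Icc 1 i, al j)
    (S0 : Matrix (Fin d) (Fin d) ℝ) (hS0 : S0.PosDef)
    (S : ℕ → Matrix (Fin d) (Fin d) ℝ)
    (hS : ∀ i, S i = alb i • S0 + (1 - alb i) • (1 : Matrix (Fin d) (Fin d) ℝ))
    (U : ℕ → Matrix (Fin d) (Fin d) ℝ)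
    (hU : ∀ i, 1 ≤ i → i ≤ t →
      U i = Real.sqrt (al i) •
        ((S (i-1) + ((1/2) * ρ * (β i / al i)) • (1 : Matrix (Fin d) (Fin d) ℝ)) * (S i)⁻¹))
    (k : ℕ) (hk : k < t) :
    ((List.range (t - k)).map (fun j => U (k + 1 + j))).prod =
      (∏ i ∈ Finset.Icc (k+1) t, Real.sqrt (al i)) •
        ((S k + ((1/2) * ρ * (β (k+1) / al (k+1))) • (1 : Matrix (Fin d) (Fin d) ℝ)) *
          ((List.range (t - 1 - k)).map (fun j =>
            (1 : Matrix (Fin d) (Fin d) ℝ) +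
              ((1/2) * ρ * (β (k+1+j+1) / al (k+1+j+1))) • (S (k+1+j))⁻¹)).prod *
          (S t)⁻¹) := by
  obtain ⟨n, rfl⟩ : ∃ n, t = k + 1 + n := ⟨t - k - 1, by omega⟩
  have hal_mem : ∀ i, 1 ≤ i → i ≤ k + 1 + n → al i ∈ Set.Ioc 0 1 := fun i hi1 hi2 => by
    obtain ⟨hβ0, hβ1⟩ := hβ i hi1 hi2
    rw [hal]
    constructor <;> linarith
  have hS_det : ∀ i ≤ k + 1 + n, IsUnit (S i).det := fun i hi => by
    obtain ⟨halb_pos, halb_le⟩ : alb i ∈ Set.Ioc 0 1 := halb i ▸ Finset.prod_mem_Ioc fun j hj =>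
      hal_mem j (Finset.mem_Icc.1 hj).1 ((Finset.mem_Icc.1 hj).2.trans hi)
    rw [hS, ← isUnit_iff_isUnit_det]
    exact (hS0.smul_add_smul_one halb_pos (sub_nonneg.2 halb_le)).isUnit
  set c : ℕ → ℝ := fun i => (1/2) * ρ * (β i / al i)
  have hU' : (List.range (k + 1 + n - k)).map (fun j => U (k + 1 + j)) =
      (List.range (n + 1)).map fun j =>
        √(al (k + 1 + j)) • ((S (k + j) + c (k + 1 + j) • 1) * (S (k + 1 + j))⁻¹) := by
    rw [show k + 1 + n - k = n + 1 by omega]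
    refine List.map_congr_left fun j hj => ?_
    have := List.mem_range.1 hj
    rw [hU _ (by omega) (by omega), show k + 1 + j - 1 = k + j by omega]
  have hmid : (List.range n).map
        (fun j => (S (k + 1 + j))⁻¹ * (S (k + (j + 1)) + c (k + 1 + (j + 1)) • 1)) =
      (List.range (k + 1 + n - 1 - k)).map fun j => 1 + c (k + 1 + j + 1) • (S (k + 1 + j))⁻¹ := by
    rw [show k + 1 + n - 1 - k = n by omega]
    refine List.map_congr_left fun j hj => ?_
    have := List.mem_range.1 hj
    rw [show k + (j + 1) = k + 1 + j by omega, inv_mul_add_smul_one (hS_det _ (by omega))]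
    rfl
  have hscal : ∏ j ∈ Finset.range (n + 1), √(al (k + 1 + j)) =
      ∏ i ∈ Finset.Icc (k + 1) (k + 1 + n), √(al i) := by
    rw [← Finset.Ico_add_one_right_eq_Icc, Finset.prod_Ico_eq_prod_range,
      show k + 1 + n + 1 - (k + 1) = n + 1 by omega]
  rw [hU', List.prod_range_map_smul, List.prod_range_succ_map_mul, hmid, hscal]
  rfl

/-- Closed form of the ordered product of the transition matrices
`U_{k+1}^ρ U_{k+2}^ρ ⋯ U_t^ρ` of the score-scaled PF-ODE. -/
theorem stmt_1 (d t : ℕ) (hd : 1 ≤ d) (ht : 1 ≤ t)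
    (ρ : ℝ) (hρ : ρ ∈ Set.Icc (0:ℝ) 1)
    (β : ℕ → ℝ) (hβ : ∀ i, 1 ≤ i → i ≤ t → β i ∈ Set.Ioo (0:ℝ) 1)
    (al : ℕ → ℝ) (hal : ∀ i, al i = 1 - β i)
    (alb : ℕ → ℝ) (halb : ∀ i, alb i = ∏ j ∈ Finset.Icc 1 i, al j)
    (S0 : Matrix (Fin d) (Fin d) ℝ) (hS0 : S0.PosDef)
    (S : ℕ → Matrix (Fin d) (Fin d) ℝ)
    (hS : ∀ i, S i = alb i • S0 + (1 - alb i) • (1 : Matrix (Fin d) (Fin d) ℝ))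
    (U : ℕ → Matrix (Fin d) (Fin d) ℝ)
    (hU : ∀ i, 1 ≤ i → i ≤ t →
      U i = Real.sqrt (al i) •
        ((S (i-1) + ((1/2) * ρ * (β i / al i)) • (1 : Matrix (Fin d) (Fin d) ℝ)) * (S i)⁻¹))
    (k : ℕ) (hk : k < t) :
    ((List.range (t - k)).map (fun j => U (k + 1 + j))).prod =
      (∏ i ∈ Finset.Icc (k+1) t, Real.sqrt (al i)) •
        ((S k + ((1/2) * ρ * (β (k+1) / al (k+1))) • (1 : Matrix (Fin d) (Fin d) ℝ)) *
          ((List.range (t - 1 - k)).map (fun j =>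
            (1 : Matrix (Fin d) (Fin d) ℝ) +
              ((1/2) * ρ * (β (k+1+j+1) / al (k+1+j+1))) • (S (k+1+j))⁻¹)).prod *
          (S t)⁻¹) :=
  stmt_1_general d t ρ β hβ al hal alb halb S0 hS0 S hS U hU k hk
end

section
/- Fix t ≥ 1 and a symmetric positive definite d×d real matrix Σ0. Then ∑_{i=2}^{t} ᾱ_{i−1} β_i Σ0 Σ_{i−1}^{-1} Σ_i^{-1} + β_1 Σ_1^{-1} = (1 − ᾱ_t) Σ_t^{-1}; that is, the coefficient matrix B_t^ρ of the score-scaled recursion specializes at ρ = 0 to B_t^0 = (1 − ᾱ_t) Σ_t^{-1}. -/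
/-!
Since `ᾱ_i = ᾱ_{i-1} α_i`, expanding `Σ_k = ᾱ_k Σ0 + (1 - ᾱ_k) I` gives
`ᾱ_{i-1} β_i Σ0 = (1 - ᾱ_i) Σ_{i-1} - (1 - ᾱ_{i-1}) Σ_i`. As `Σ0` commutes with `Σ_{i-1}`,
multiplying by `Σ_{i-1}⁻¹ Σ_i⁻¹` turns the `i`-th summand into
`(1 - ᾱ_i) Σ_i⁻¹ - (1 - ᾱ_{i-1}) Σ_{i-1}⁻¹`, so the sum telescopes to
`(1 - ᾱ_t) Σ_t⁻¹ - (1 - ᾱ_1) Σ_1⁻¹`, and `β_1 = 1 - ᾱ_1`.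
-/

open Matrix Finset

lemma Finset.sum_Icc_two_sub_pred {G : Type*} [AddCommGroup G] (f : ℕ → G) {t : ℕ} (ht : 1 ≤ t) :
    ∑ i ∈ Icc 2 t, (f i - f (i - 1)) = f t - f 1 := by
  induction t, ht using Nat.le_induction with
  | base => simp
  | succ t ht ih =>
    rw [sum_Icc_succ_top (by omega), ih, Nat.add_sub_cancel]
    abel

lemma Finset.prod_one_sub_mem_Ioc {ι : Type*} {s : Finset ι} {β : ι → ℝ}
    (hβ : ∀ i ∈ s, β i ∈ Set.Ioo 0 1) : ∏ i ∈ s, (1 - β i) ∈ Set.Ioc 0 1 :=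
  ⟨prod_pos fun i hi => sub_pos.2 (hβ i hi).2,
    prod_le_one (fun i hi => sub_nonneg.2 (hβ i hi).2.le)
      fun i hi => sub_le_self _ (hβ i hi).1.le⟩

namespace Matrix

variable {n : Type*} [DecidableEq n]

lemma PosDef.smul_add_smul_one_s3 {A : Matrix n n ℝ} (hA : A.PosDef) {a b : ℝ} (ha : 0 < a)
    (hb : 0 ≤ b) : (a • A + b • (1 : Matrix n n ℝ)).PosDef :=
  (hA.smul ha).add_posSemidef (PosSemidef.one.smul hb)

lemma commute_nonsing_inv_right [Fintype n] {R : Type*} [CommRing R] {A P : Matrix n n R}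
    (h : Commute A P) (hP : IsUnit P.det) : Commute A P⁻¹ := by
  obtain ⟨u, rfl⟩ := (isUnit_iff_isUnit_det P).2 hP
  rw [nonsing_inv_eq_ringInverse, Ring.inverse_unit]
  exact h.units_inv_right

lemma smul_mul_nonsing_inv_mul_nonsing_inv [Fintype n] {R : Type*} [CommRing R]
    {A P Q : Matrix n n R} (hP : IsUnit P.det) (hQ : IsUnit Q.det) (hAP : Commute A P) {c x y : R}
    (h : c • A = x • P - y • Q) : c • (A * P⁻¹ * Q⁻¹) = x • Q⁻¹ - y • P⁻¹ := by
  calc c • (A * P⁻¹ * Q⁻¹) = P⁻¹ * (c • A) * Q⁻¹ := by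
        rw [(commute_nonsing_inv_right hAP hP).eq, mul_smul_comm, smul_mul_assoc]
    _ = x • Q⁻¹ - y • P⁻¹ := by
        rw [h, mul_sub, sub_mul, mul_smul_comm, mul_smul_comm, smul_mul_assoc, smul_mul_assoc,
          nonsing_inv_mul _ hP, one_mul, mul_assoc, mul_nonsing_inv _ hQ, mul_one]

end Matrix

theorem stmt_3_general (d t : ℕ) (ht : 1 ≤ t)
    (β : ℕ → ℝ) (hβ : ∀ k, 1 ≤ k → k ≤ t → β k ∈ Set.Ioo (0:ℝ) 1)
    (al : ℕ → ℝ) (hal : ∀ k, al k = 1 - β k)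
    (alb : ℕ → ℝ) (halb : ∀ k, alb k = ∏ i ∈ Finset.Icc 1 k, al i)
    (S0 : Matrix (Fin d) (Fin d) ℝ) (hS0 : S0.PosDef)
    (S : ℕ → Matrix (Fin d) (Fin d) ℝ)
    (hS : ∀ k, S k = alb k • S0 + (1 - alb k) • (1 : Matrix (Fin d) (Fin d) ℝ)) :
    (∑ i ∈ Finset.Icc 2 t, (alb (i-1) * β i) • (S0 * (S (i-1))⁻¹ * (S i)⁻¹))
      + β 1 • (S 1)⁻¹
      = (1 - alb t) • (S t)⁻¹ := by
  simp only [hal] at halb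
  have halb_succ : ∀ i, 1 ≤ i → alb i = alb (i - 1) * (1 - β i) := fun i hi => by
    obtain ⟨j, rfl⟩ := Nat.exists_eq_add_of_le' hi
    rw [Nat.add_sub_cancel, halb, halb, prod_Icc_succ_top (by omega)]
  have hdet : ∀ k ≤ t, IsUnit (S k).det := fun k hk => by
    obtain ⟨hpos, hle⟩ := halb k ▸ prod_one_sub_mem_Ioc fun i hi =>
      hβ i (mem_Icc.1 hi).1 ((mem_Icc.1 hi).2.trans hk)
    rw [← isUnit_iff_isUnit_det, hS]
    exact (hS0.smul_add_smul_one_s3 hpos (sub_nonneg.2 hle)).isUnit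
  have hstep : ∀ i ∈ Icc 2 t, (alb (i - 1) * β i) • (S0 * (S (i - 1))⁻¹ * (S i)⁻¹)
      = (1 - alb i) • (S i)⁻¹ - (1 - alb (i - 1)) • (S (i - 1))⁻¹ := fun i hi => by
    obtain ⟨h2, hit⟩ := mem_Icc.1 hi
    refine smul_mul_nonsing_inv_mul_nonsing_inv (hdet _ (by omega)) (hdet i hit) ?_ ?_
    · rw [hS]
      exact ((Commute.refl S0).smul_right _).add_right ((Commute.one_right S0).smul_right _)
    · rw [hS, hS, halb_succ i (by omega)]
      module
  have hβ1 : β 1 = 1 - alb 1 := by simp [halb]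
  rw [sum_congr rfl hstep, sum_Icc_two_sub_pred (fun k => (1 - alb k) • (S k)⁻¹) ht, hβ1,
    sub_add_cancel]

/-- The coefficient matrix `B_t^ρ` of the score-scaled recursion specializes at `ρ = 0` to
`(1 − ᾱ_t) Σ_t⁻¹`: `∑_{i=2}^t ᾱ_{i-1} β_i Σ0 Σ_{i-1}⁻¹ Σ_i⁻¹ + β_1 Σ_1⁻¹ = (1 − ᾱ_t) Σ_t⁻¹`. -/
theorem stmt_3 (d t : ℕ) (hd : 1 ≤ d) (ht : 1 ≤ t)
    (β : ℕ → ℝ) (hβ : ∀ k, 1 ≤ k → k ≤ t → β k ∈ Set.Ioo (0:ℝ) 1)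
    (al : ℕ → ℝ) (hal : ∀ k, al k = 1 - β k)
    (alb : ℕ → ℝ) (halb : ∀ k, alb k = ∏ i ∈ Finset.Icc 1 k, al i)
    (S0 : Matrix (Fin d) (Fin d) ℝ) (hS0 : S0.PosDef)
    (S : ℕ → Matrix (Fin d) (Fin d) ℝ)
    (hS : ∀ k, S k = alb k • S0 + (1 - alb k) • (1 : Matrix (Fin d) (Fin d) ℝ)) :
    (∑ i ∈ Finset.Icc 2 t, (alb (i-1) * β i) • (S0 * (S (i-1))⁻¹ * (S i)⁻¹))
      + β 1 • (S 1)⁻¹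
      = (1 - alb t) • (S t)⁻¹ :=
  stmt_3_general d t ht β hβ al hal alb halb S0 hS0 S hS
end

section
/- Let μ0 ∈ ℝ, σ0 > 0, ᾱ ∈ (0,1), σ_t = √(ᾱ σ0² + (1 − ᾱ)), and let f ∈ ℝ. Let X, N be independent real random variables with X ~ N(μ0, σ0²), N ~ N(0,1), Z = √ᾱ X + √(1−ᾱ) N, and define the linear decoder X̂_f = (σ0 f/σ_t) Z + (1 − √ᾱ σ0 f/σ_t) μ0. Then: (i) E[X̂_f] = μ0 and Var(X̂_f) = σ0² f²; and (ii) E[(X − X̂_f)²] = σ0² ( f − √ᾱ σ0/σ_t )² + σ0² − ᾱ σ0⁴/σ_t². (These are the exact distortion and marginal second-moment levels of the score-scaled PF-ODE decoder with product factor f.) -/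
open MeasureTheory ProbabilityTheory
open scoped NNReal ENNReal

/-!
Both `X̂_f` and `X − X̂_f` are affine combinations `a X + b N + c` of the independent pair `(X, N)`,
so their means are `a 𝔼X + b 𝔼N + c`, their variances `a² Var X + b² Var N`, and the mean square
error is variance plus squared mean. With `𝔼X = μ0`, `Var X = σ0²`, `𝔼N = 0`, `Var N = 1`
everything reduces to algebra in `√ᾱ`, `√(1 − ᾱ)` and `σ_t² = ᾱ σ0² + 1 − ᾱ`.
-/

namespace ProbabilityTheory

variable {Ω : Type*} [MeasurableSpace Ω] {P : Measure Ω}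

/-- The map of a non-AE-measurable function is `0`, so a nonzero law forces AE-measurability. -/
lemma hasLaw_of_map_eq {𝓧 : Type*} [MeasurableSpace 𝓧] {μ : Measure 𝓧} [NeZero μ]
    {X : Ω → 𝓧} (h : P.map X = μ) : HasLaw X μ P :=
  ⟨AEMeasurable.of_map_ne_zero (h ▸ NeZero.ne μ), h⟩

namespace HasLaw

variable {X : Ω → ℝ} {m : ℝ} {v : ℝ≥0}

lemma memLp_of_gaussianReal (hX : HasLaw X (gaussianReal m v) P) {p : ℝ≥0∞} (hp : p ≠ ∞) :
    MemLp X p P :=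
  (memLp_map_measure_iff aestronglyMeasurable_id hX.aemeasurable).1
    (hX.map_eq ▸ memLp_id_gaussianReal' p hp)

lemma integral_of_gaussianReal (hX : HasLaw X (gaussianReal m v) P) : P[X] = m :=
  hX.integral_eq.trans integral_id_gaussianReal

lemma variance_of_gaussianReal (hX : HasLaw X (gaussianReal m v) P) : Var[X; P] = v :=
  hX.variance_eq.trans variance_id_gaussianReal

end HasLaw

section AffineCombination

variable [IsProbabilityMeasure P] {X Y : Ω → ℝ}

lemma integral_affine_comb (hX : Integrable X P) (hY : Integrable Y P) (a b c : ℝ) :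
    ∫ ω, (a * X ω + b * Y ω + c) ∂P = a * P[X] + b * P[Y] + c := by
  have hXY : Integrable (fun ω ↦ a * X ω + b * Y ω) P := (hX.const_mul a).add (hY.const_mul b)
  rw [integral_add hXY (integrable_const c), integral_add (hX.const_mul a) (hY.const_mul b),
    integral_const_mul, integral_const_mul, integral_const, probReal_univ, one_smul]

lemma IndepFun.variance_affine_comb (h : X ⟂ᵢ[P] Y) (hX : MemLp X 2 P) (hY : MemLp Y 2 P)
    (a b c : ℝ) :
    Var[fun ω ↦ a * X ω + b * Y ω + c; P] = a ^ 2 * Var[X; P] + b ^ 2 * Var[Y; P] := by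
  have hXY : MemLp (fun ω ↦ a * X ω + b * Y ω) 2 P := (hX.const_mul a).add (hY.const_mul b)
  rw [variance_add_const hXY.1 c,
    (h.comp (measurable_const_mul a) (measurable_const_mul b)).variance_fun_add
      (hX.const_mul a) (hY.const_mul b),
    variance_const_mul, variance_const_mul]

lemma IndepFun.integral_sq_affine_comb (h : X ⟂ᵢ[P] Y) (hX : MemLp X 2 P) (hY : MemLp Y 2 P)
    (a b c : ℝ) :
    ∫ ω, (a * X ω + b * Y ω + c) ^ 2 ∂P =
      a ^ 2 * Var[X; P] + b ^ 2 * Var[Y; P] + (a * P[X] + b * P[Y] + c) ^ 2 := by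
  have hL2 : MemLp (fun ω ↦ a * X ω + b * Y ω + c) 2 P :=
    ((hX.const_mul a).add (hY.const_mul b)).add (memLp_const c)
  rw [← h.variance_affine_comb hX hY, variance_eq_sub hL2,
    integral_affine_comb (hX.integrable one_le_two) (hY.integrable one_le_two)]
  simp only [Pi.pow_apply]
  ring

end AffineCombination

end ProbabilityTheory

theorem stmt_8_general {Ω : Type*} [MeasurableSpace Ω] (P : Measure Ω) [IsProbabilityMeasure P]
    (μ0 σ0 ab f : ℝ) (hab : ab ∈ Set.Ioo (0:ℝ) 1)
    (σt : ℝ) (hσt : σt = Real.sqrt (ab * σ0 ^ 2 + (1 - ab)))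
    (X N : Ω → ℝ)
    (hindep : IndepFun X N P)
    (hXlaw : P.map X = gaussianReal μ0 (Real.toNNReal (σ0 ^ 2)))
    (hNlaw : P.map N = gaussianReal 0 1)
    (Z : Ω → ℝ)
    (hZ : Z = fun ω => Real.sqrt ab * X ω + Real.sqrt (1 - ab) * N ω)
    (Xhat : Ω → ℝ)
    (hXhat : Xhat = fun ω => (σ0 * f / σt) * Z ω + (1 - Real.sqrt ab * σ0 * f / σt) * μ0) :
    (∫ ω, Xhat ω ∂P) = μ0 ∧
    variance Xhat P = σ0 ^ 2 * f ^ 2 ∧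
    (∫ ω, (X ω - Xhat ω) ^ 2 ∂P) =
      σ0 ^ 2 * (f - Real.sqrt ab * σ0 / σt) ^ 2 + σ0 ^ 2 - ab * σ0 ^ 4 / σt ^ 2 := by
  obtain ⟨hab0, hab1⟩ := hab
  have hs : Real.sqrt ab ^ 2 = ab := Real.sq_sqrt hab0.le
  have ht : Real.sqrt (1 - ab) ^ 2 = 1 - ab := Real.sq_sqrt (by linarith)
  have hσt2 : σt ^ 2 = ab * σ0 ^ 2 + (1 - ab) := hσt ▸ Real.sq_sqrt (by positivity)
  have hσt0 : σt ≠ 0 := by rintro rfl; nlinarith [mul_nonneg hab0.le (sq_nonneg σ0)]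
  have hXg := hasLaw_of_map_eq hXlaw
  have hNg := hasLaw_of_map_eq hNlaw
  have hXL2 := hXg.memLp_of_gaussianReal (p := 2) (by norm_num)
  have hNL2 := hNg.memLp_of_gaussianReal (p := 2) (by norm_num)
  have hVX : Var[X; P] = σ0 ^ 2 := by
    rw [hXg.variance_of_gaussianReal, Real.coe_toNNReal _ (sq_nonneg σ0)]
  obtain ⟨c, hc⟩ : ∃ c, c = σ0 * f / σt := ⟨_, rfl⟩
  have hgain : c ^ 2 * (Real.sqrt ab ^ 2 * σ0 ^ 2 + Real.sqrt (1 - ab) ^ 2) = σ0 ^ 2 * f ^ 2 := by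
    rw [hs, ht, ← hσt2, hc, div_pow, div_mul_cancel₀ _ (pow_ne_zero 2 hσt0), mul_pow]
  have hXhat' : Xhat = fun ω ↦
      c * Real.sqrt ab * X ω + c * Real.sqrt (1 - ab) * N ω + (1 - c * Real.sqrt ab) * μ0 := by
    subst hXhat hZ hc; funext ω; ring
  have hErr : ∀ ω, (X ω - Xhat ω) ^ 2 = ((1 - c * Real.sqrt ab) * X ω
      + (-(c * Real.sqrt (1 - ab))) * N ω + (-(1 - c * Real.sqrt ab) * μ0)) ^ 2 := by
    intro ω; rw [hXhat']; ring
  refine ⟨?_, ?_, ?_⟩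
  · rw [hXhat', integral_affine_comb (hXL2.integrable one_le_two) (hNL2.integrable one_le_two),
      hXg.integral_of_gaussianReal, hNg.integral_of_gaussianReal]
    ring
  · rw [hXhat', hindep.variance_affine_comb hXL2 hNL2, hVX, hNg.variance_of_gaussianReal,
      NNReal.coe_one]
    linear_combination hgain
  · simp only [hErr, hindep.integral_sq_affine_comb hXL2 hNL2, hVX, hNg.variance_of_gaussianReal,
      NNReal.coe_one, hXg.integral_of_gaussianReal, hNg.integral_of_gaussianReal]
    linear_combination hgain - 2 * Real.sqrt ab * σ0 ^ 2 * hc - σ0 ^ 4 / σt ^ 2 * hs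

/-- Exact mean, variance and mean-square error of the linear decoder
`X̂_f = (σ0 f/σ_t) Z + (1 − √ᾱ σ0 f/σ_t) μ0` from the AWGN observation
`Z = √ᾱ X + √(1−ᾱ) N` of a scalar Gaussian source `X ~ N(μ0, σ0²)`. -/
theorem stmt_8 {Ω : Type*} [MeasurableSpace Ω] (P : Measure Ω) [IsProbabilityMeasure P]
    (μ0 σ0 ab f : ℝ) (hσ0 : 0 < σ0) (hab : ab ∈ Set.Ioo (0:ℝ) 1)
    (σt : ℝ) (hσt : σt = Real.sqrt (ab * σ0 ^ 2 + (1 - ab)))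
    (X N : Ω → ℝ) (hX : Measurable X) (hN : Measurable N)
    (hindep : IndepFun X N P)
    (hXlaw : P.map X = gaussianReal μ0 (Real.toNNReal (σ0 ^ 2)))
    (hNlaw : P.map N = gaussianReal 0 1)
    (Z : Ω → ℝ)
    (hZ : Z = fun ω => Real.sqrt ab * X ω + Real.sqrt (1 - ab) * N ω)
    (Xhat : Ω → ℝ)
    (hXhat : Xhat = fun ω => (σ0 * f / σt) * Z ω + (1 - Real.sqrt ab * σ0 * f / σt) * μ0) :
    (∫ ω, Xhat ω ∂P) = μ0 ∧
    variance Xhat P = σ0 ^ 2 * f ^ 2 ∧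
    (∫ ω, (X ω - Xhat ω) ^ 2 ∂P) =
      σ0 ^ 2 * (f - Real.sqrt ab * σ0 / σt) ^ 2 + σ0 ^ 2 - ab * σ0 ^ 4 / σt ^ 2 :=
  stmt_8_general P μ0 σ0 ab f hab σt hσt X N hindep hXlaw hNlaw Z hZ Xhat hXhat
end

section
/- Let σ0 > 0, ᾱ ∈ (0,1), σ_t = √(ᾱ σ0² + (1 − ᾱ)), and P ≥ 0. Consider the minimization, over pairs (a, σ̂) ∈ ℝ × [0,∞) subject to a² σ_t² ≤ σ̂² and (σ0 − σ̂)² ≤ P, of the objective σ0² + σ̂² − 2 a √ᾱ σ0². Its minimum value equals (1 − ᾱ) σ0²/σ_t² + ( σ0 − √P − √ᾱ σ0²/σ_t )² if √P < σ0 − √ᾱ σ0²/σ_t, and equals (1 − ᾱ) σ0²/σ_t² if √P ≥ σ0 − √ᾱ σ0²/σ_t. (This is the optimal distortion–perception tradeoff D_t(P) for a scalar Gaussian source observed through AWGN, under mean-square distortion and squared Wasserstein-2 perception constraint, after reduction to jointly Gaussian estimators.) -/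
/-!
Write `s = c / σt` with `c = √ᾱ σ0²`. The constraint `a² σt² ≤ σ̂²` says `a σt ≤ σ̂`, so for fixed `σ̂`
the objective `σ0² + σ̂² − 2ac` is minimised at `a = σ̂ / σt`, where it equals
`(σ0² − s²) + (σ̂ − s)²`. What remains is to minimise the distance from `s` to `σ̂` over the
perception interval `|σ0 − σ̂| ≤ √P`: since `0 ≤ s < σ0`, the optimum is `σ̂ = s` when `s` lies in that
interval and its left end point `σ̂ = σ0 − √P` otherwise. Finally
`σ0² − s² = (1 − ᾱ) σ0² / σt²` because `σt² = ᾱ σ0² + (1 − ᾱ)`.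
-/

def distortionValues (σ0 c σt P : ℝ) : Set ℝ :=
  {y | ∃ a σh : ℝ, 0 ≤ σh ∧ a ^ 2 * σt ^ 2 ≤ σh ^ 2 ∧ (σ0 - σh) ^ 2 ≤ P ∧
    y = σ0 ^ 2 + σh ^ 2 - 2 * a * c}

section DistortionValues

variable {σ0 c σt P : ℝ}

lemma sub_sq_add_le_objective (hσt : 0 < σt) (hc : 0 ≤ c) {a σh : ℝ} (hσh : 0 ≤ σh)
    (h : a ^ 2 * σt ^ 2 ≤ σh ^ 2) :
    σ0 ^ 2 - (c / σt) ^ 2 + (σh - c / σt) ^ 2 ≤ σ0 ^ 2 + σh ^ 2 - 2 * a * c := by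
  have hlin : a * σt ≤ σh := le_of_sq_le_sq (by rwa [mul_pow]) hσh
  have hac : a * c ≤ σh * (c / σt) := by
    calc a * c = a * σt * (c / σt) := by field_simp
      _ ≤ σh * (c / σt) := by gcongr
  nlinarith

lemma objective_div_eq (hσt : σt ≠ 0) (σh : ℝ) :
    σ0 ^ 2 + σh ^ 2 - 2 * (σh / σt) * c = σ0 ^ 2 - (c / σt) ^ 2 + (σh - c / σt) ^ 2 := by
  field_simp
  ring

lemma isLeast_distortionValues_of_isMinOn (hσt : 0 < σt) (hc : 0 ≤ c) {σh : ℝ}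
    (hσh : σh ∈ {x | 0 ≤ x ∧ (σ0 - x) ^ 2 ≤ P})
    (hmin : IsMinOn (fun x => (x - c / σt) ^ 2) {x | 0 ≤ x ∧ (σ0 - x) ^ 2 ≤ P} σh) :
    IsLeast (distortionValues σ0 c σt P) (σ0 ^ 2 - (c / σt) ^ 2 + (σh - c / σt) ^ 2) := by
  refine ⟨⟨σh / σt, σh, hσh.1, ?_, hσh.2, (objective_div_eq hσt.ne' σh).symm⟩, ?_⟩
  · rw [div_pow, div_mul_cancel₀ _ (by positivity)]
  · rintro _ ⟨a, x, hx, hcon, hper, rfl⟩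
    have hdist : (σh - c / σt) ^ 2 ≤ (x - c / σt) ^ 2 := hmin ⟨hx, hper⟩
    linarith [sub_sq_add_le_objective (σ0 := σ0) hσt hc hx hcon]

lemma isLeast_distortionValues_of_sqrt_lt (hσt : 0 < σt) (hc : 0 ≤ c) (hP : 0 ≤ P)
    (h : Real.sqrt P < σ0 - c / σt) :
    IsLeast (distortionValues σ0 c σt P)
      (σ0 ^ 2 - (c / σt) ^ 2 + (σ0 - Real.sqrt P - c / σt) ^ 2) := by
  have hs : 0 ≤ c / σt := by positivity
  refine isLeast_distortionValues_of_isMinOn hσt hc ⟨by linarith, ?_⟩ ?_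
  · rw [sub_sub_cancel, Real.sq_sqrt hP]
  · rintro x ⟨-, hper⟩
    have hx : σ0 - x ≤ Real.sqrt P := (le_abs_self _).trans (Real.abs_le_sqrt hper)
    show (σ0 - Real.sqrt P - c / σt) ^ 2 ≤ (x - c / σt) ^ 2
    exact pow_le_pow_left₀ (by linarith) (by linarith) 2

lemma isLeast_distortionValues_of_sub_sq_le (hσt : 0 < σt) (hc : 0 ≤ c)
    (h : (σ0 - c / σt) ^ 2 ≤ P) :
    IsLeast (distortionValues σ0 c σt P) (σ0 ^ 2 - (c / σt) ^ 2) := by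
  have hmin := isLeast_distortionValues_of_isMinOn (σh := c / σt) hσt hc
    ⟨by positivity, h⟩ (fun x _ => by simp [sq_nonneg])
  simpa using hmin

end DistortionValues

lemma sq_sub_sq_sqrt_mul_div_eq {σ0 ab σt : ℝ} (hab : 0 ≤ ab) (hσt : σt ≠ 0)
    (hσt2 : σt ^ 2 = ab * σ0 ^ 2 + (1 - ab)) :
    σ0 ^ 2 - (Real.sqrt ab * σ0 ^ 2 / σt) ^ 2 = (1 - ab) * σ0 ^ 2 / σt ^ 2 := by
  rw [div_pow, mul_pow, Real.sq_sqrt hab, eq_div_iff (by positivity), sub_mul,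
    div_mul_cancel₀ _ (by positivity), hσt2]
  ring

/-- The optimal distortion–perception tradeoff `D_t(P)` for a scalar Gaussian source
observed through AWGN, after reduction to jointly Gaussian (linear) estimators:
minimize `σ0² + σ̂² − 2a√ᾱσ0²` over `(a, σ̂) ∈ ℝ × [0,∞)` with `a²σ_t² ≤ σ̂²` and
`(σ0 − σ̂)² ≤ P`. -/
theorem stmt_9 (σ0 ab P : ℝ) (hσ0 : 0 < σ0) (hab : ab ∈ Set.Ioo (0:ℝ) 1) (hP : 0 ≤ P)
    (σt : ℝ) (hσt : σt = Real.sqrt (ab * σ0 ^ 2 + (1 - ab))) :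
    (Real.sqrt P < σ0 - Real.sqrt ab * σ0 ^ 2 / σt →
      IsLeast
        {y : ℝ | ∃ a σh : ℝ, 0 ≤ σh ∧ a ^ 2 * σt ^ 2 ≤ σh ^ 2 ∧ (σ0 - σh) ^ 2 ≤ P ∧
          y = σ0 ^ 2 + σh ^ 2 - 2 * a * Real.sqrt ab * σ0 ^ 2}
        ((1 - ab) * σ0 ^ 2 / σt ^ 2 +
          (σ0 - Real.sqrt P - Real.sqrt ab * σ0 ^ 2 / σt) ^ 2)) ∧
    (σ0 - Real.sqrt ab * σ0 ^ 2 / σt ≤ Real.sqrt P →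
      IsLeast
        {y : ℝ | ∃ a σh : ℝ, 0 ≤ σh ∧ a ^ 2 * σt ^ 2 ≤ σh ^ 2 ∧ (σ0 - σh) ^ 2 ≤ P ∧
          y = σ0 ^ 2 + σh ^ 2 - 2 * a * Real.sqrt ab * σ0 ^ 2}
        ((1 - ab) * σ0 ^ 2 / σt ^ 2)) := by
  obtain ⟨hab0, hab1⟩ := hab
  have hrad : 0 < ab * σ0 ^ 2 + (1 - ab) := by nlinarith [mul_pos hab0 (pow_pos hσ0 2)]
  have hσt0 : 0 < σt := hσt ▸ Real.sqrt_pos.2 hrad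
  have hc : 0 ≤ Real.sqrt ab * σ0 ^ 2 := by positivity
  have hgap := sq_sub_sq_sqrt_mul_div_eq hab0.le hσt0.ne' (hσt ▸ Real.sq_sqrt hrad.le)
  have hs_le : Real.sqrt ab * σ0 ^ 2 / σt ≤ σ0 :=
    pow_le_pow_iff_left₀ (by positivity) hσ0.le two_ne_zero |>.1 <| by
      nlinarith [show 0 ≤ (1 - ab) * σ0 ^ 2 / σt ^ 2 by bound]
  simp only [show ∀ a : ℝ, 2 * a * Real.sqrt ab * σ0 ^ 2 = 2 * a * (Real.sqrt ab * σ0 ^ 2)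
    from fun a => mul_assoc _ _ _]
  rw [← hgap]
  refine ⟨fun h => isLeast_distortionValues_of_sqrt_lt hσt0 hc hP h, fun h => ?_⟩
  exact isLeast_distortionValues_of_sub_sq_le hσt0 hc <|
    (Real.le_sqrt (by linarith) hP).1 h
end

section
/- Let d ≥ 1, ᾱ ∈ (0,1), P ≥ 0, and let λ_1, …, λ_d > 0; set λ_ℓ^{(t)} = ᾱ λ_ℓ + (1 − ᾱ), c_ℓ = √( ᾱ λ_ℓ / λ_ℓ^{(t)} ) ∈ (0,1), and S = ∑_{ℓ=1}^{d} λ_ℓ (1 − c_ℓ)² = ∑_{ℓ=1}^{d} (λ_ℓ/λ_ℓ^{(t)}) ( √(λ_ℓ^{(t)}) − √(ᾱ λ_ℓ) )². Then the minimum, over vectors f ∈ ℝ^d with f_ℓ ≥ 0 for all ℓ and ∑_{ℓ=1}^{d} λ_ℓ (1 − f_ℓ)² ≤ P, of ∑_{ℓ=1}^{d} λ_ℓ ( f_ℓ − c_ℓ )², equals ( √S − √P )² if P < S, and equals 0 if P ≥ S. Consequently the optimal distortion–perception value D_t(P) = min ∑_ℓ λ_ℓ (f_ℓ − c_ℓ)²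 + ∑_ℓ (1−ᾱ) λ_ℓ/λ_ℓ^{(t)} equals ( √S − √P )² + ∑_{ℓ=1}^{d} (1−ᾱ) λ_ℓ/λ_ℓ^{(t)} when P < S, and ∑_{ℓ=1}^{d} (1−ᾱ) λ_ℓ/λ_ℓ^{(t)} when P ≥ S. -/
/-- Lower bound via Cauchy–Schwarz / triangle inequality in weighted ℓ². -/
lemma aux_lb (d : ℕ) (lam c f : Fin d → ℝ) (hlam : ∀ ℓ, 0 < lam ℓ)
    (P S : ℝ) (hP : 0 ≤ P) (hPS : P ≤ S)
    (hS : S = ∑ ℓ, lam ℓ * (1 - c ℓ) ^ 2)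
    (hf : (∑ ℓ, lam ℓ * (1 - f ℓ) ^ 2) ≤ P) :
    (Real.sqrt S - Real.sqrt P) ^ 2 ≤ ∑ ℓ, lam ℓ * (f ℓ - c ℓ) ^ 2 := by
  set y := ∑ ℓ, lam ℓ * (f ℓ - c ℓ) ^ 2 with hy
  set P' := ∑ ℓ, lam ℓ * (1 - f ℓ) ^ 2 with hP'
  have hy0 : 0 ≤ y := Finset.sum_nonneg fun ℓ _ => mul_nonneg (hlam ℓ).le (sq_nonneg _)
  have hP'0 : 0 ≤ P' := Finset.sum_nonneg fun ℓ _ => mul_nonneg (hlam ℓ).le (sq_nonneg _)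
  set a : Fin d → ℝ := fun ℓ => Real.sqrt (lam ℓ) * (1 - f ℓ)
  set b : Fin d → ℝ := fun ℓ => Real.sqrt (lam ℓ) * (f ℓ - c ℓ)
  have CS := Finset.sum_mul_sq_le_sq_mul_sq Finset.univ a b
  have hab : (∑ ℓ, a ℓ * b ℓ) = ∑ ℓ, lam ℓ * ((1 - f ℓ) * (f ℓ - c ℓ)) := by
    refine Finset.sum_congr rfl fun ℓ _ => ?_
    have h := Real.sq_sqrt (hlam ℓ).le
    simp only [a, b]; linear_combination (1 - f ℓ) * (f ℓ - c ℓ) * h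
  have ha2 : (∑ ℓ, a ℓ ^ 2) = P' := by
    refine Finset.sum_congr rfl fun ℓ _ => ?_
    have h := Real.sq_sqrt (hlam ℓ).le
    simp only [a]; linear_combination (1 - f ℓ) ^ 2 * h
  have hb2 : (∑ ℓ, b ℓ ^ 2) = y := by
    refine Finset.sum_congr rfl fun ℓ _ => ?_
    have h := Real.sq_sqrt (hlam ℓ).le
    simp only [b]; linear_combination (f ℓ - c ℓ) ^ 2 * h
  rw [hab, ha2, hb2] at CS
  set cross := ∑ ℓ, lam ℓ * ((1 - f ℓ) * (f ℓ - c ℓ)) with hcr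
  have hsP : Real.sqrt P ^ 2 = P := Real.sq_sqrt hP
  have hsy : Real.sqrt y ^ 2 = y := Real.sq_sqrt hy0
  have hcross : cross ≤ Real.sqrt P * Real.sqrt y := by
    have h1 : cross ^ 2 ≤ P * y := le_trans CS (mul_le_mul_of_nonneg_right hf hy0)
    have h2 : cross ≤ Real.sqrt (P * y) := by
      calc cross ≤ |cross| := le_abs_self _
        _ = Real.sqrt (cross ^ 2) := (Real.sqrt_sq_eq_abs _).symm
        _ ≤ Real.sqrt (P * y) := Real.sqrt_le_sqrt h1
    rwa [Real.sqrt_mul hP] at h2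
  have hsplit : S = P' + 2 * cross + y := by
    rw [hS, hP', hcr, hy, Finset.mul_sum, ← Finset.sum_add_distrib,
      ← Finset.sum_add_distrib]
    exact Finset.sum_congr rfl fun ℓ _ => by ring
  have hSley : S ≤ (Real.sqrt P + Real.sqrt y) ^ 2 := by nlinarith
  have h3 : Real.sqrt S ≤ Real.sqrt P + Real.sqrt y := by
    calc Real.sqrt S ≤ Real.sqrt ((Real.sqrt P + Real.sqrt y) ^ 2) :=
          Real.sqrt_le_sqrt hSley
      _ = Real.sqrt P + Real.sqrt y := by
          rw [Real.sqrt_sq (by positivity)]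
  have h4 : Real.sqrt P ≤ Real.sqrt S := Real.sqrt_le_sqrt hPS
  nlinarith

/-- Reduced multivariate Gaussian distortion–perception tradeoff: the minimum of
`∑ λ_ℓ (f_ℓ − c_ℓ)²` over `f` with `f_ℓ ≥ 0` and `∑ λ_ℓ (1 − f_ℓ)² ≤ P` equals
`(√S − √P)²` when `P < S` and `0` when `P ≥ S`; consequently the optimal
distortion–perception value `D_t(P)` equals `(√S − √P)² + ∑ (1−ᾱ)λ_ℓ/λ_ℓ^{(t)}`
when `P < S`, and `∑ (1−ᾱ)λ_ℓ/λ_ℓ^{(t)}` when `P ≥ S`. -/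
theorem stmt_12 (d : ℕ) (hd : 1 ≤ d) (ab P : ℝ) (hab : ab ∈ Set.Ioo (0:ℝ) 1) (hP : 0 ≤ P)
    (lam : Fin d → ℝ) (hlam : ∀ ℓ, 0 < lam ℓ)
    (lamt : Fin d → ℝ) (hlamt : ∀ ℓ, lamt ℓ = ab * lam ℓ + (1 - ab))
    (c : Fin d → ℝ) (hc : ∀ ℓ, c ℓ = Real.sqrt (ab * lam ℓ / lamt ℓ))
    (S : ℝ) (hS : S = ∑ ℓ, lam ℓ * (1 - c ℓ) ^ 2) :
    (S = ∑ ℓ, (lam ℓ / lamt ℓ) *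
        (Real.sqrt (lamt ℓ) - Real.sqrt (ab * lam ℓ)) ^ 2) ∧
    (P < S →
      IsLeast
        {y : ℝ | ∃ f : Fin d → ℝ, (∀ ℓ, 0 ≤ f ℓ) ∧ (∑ ℓ, lam ℓ * (1 - f ℓ) ^ 2) ≤ P ∧
          y = ∑ ℓ, lam ℓ * (f ℓ - c ℓ) ^ 2}
        ((Real.sqrt S - Real.sqrt P) ^ 2)) ∧
    (S ≤ P →
      IsLeast
        {y : ℝ | ∃ f : Fin d → ℝ, (∀ ℓ, 0 ≤ f ℓ) ∧ (∑ ℓ, lam ℓ * (1 - f ℓ) ^ 2) ≤ P ∧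
          y = ∑ ℓ, lam ℓ * (f ℓ - c ℓ) ^ 2}
        0) ∧
    (P < S →
      IsLeast
        {y : ℝ | ∃ f : Fin d → ℝ, (∀ ℓ, 0 ≤ f ℓ) ∧ (∑ ℓ, lam ℓ * (1 - f ℓ) ^ 2) ≤ P ∧
          y = (∑ ℓ, lam ℓ * (f ℓ - c ℓ) ^ 2) + ∑ ℓ, (1 - ab) * lam ℓ / lamt ℓ}
        ((Real.sqrt S - Real.sqrt P) ^ 2 + ∑ ℓ, (1 - ab) * lam ℓ / lamt ℓ)) ∧
    (S ≤ P →
      IsLeast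
        {y : ℝ | ∃ f : Fin d → ℝ, (∀ ℓ, 0 ≤ f ℓ) ∧ (∑ ℓ, lam ℓ * (1 - f ℓ) ^ 2) ≤ P ∧
          y = (∑ ℓ, lam ℓ * (f ℓ - c ℓ) ^ 2) + ∑ ℓ, (1 - ab) * lam ℓ / lamt ℓ}
        (∑ ℓ, (1 - ab) * lam ℓ / lamt ℓ)) := by
  obtain ⟨hab0, hab1⟩ := hab
  have hlt : ∀ ℓ, 0 < lamt ℓ := fun ℓ => by
    rw [hlamt]; nlinarith [hlam ℓ]
  have hc0 : ∀ ℓ, 0 ≤ c ℓ := fun ℓ => by rw [hc]; exact Real.sqrt_nonneg _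
  have hc1 : ∀ ℓ, c ℓ ≤ 1 := fun ℓ => by
    rw [hc]
    have h1 : ab * lam ℓ / lamt ℓ ≤ 1 := by
      rw [div_le_one (hlt ℓ), hlamt]; nlinarith
    calc Real.sqrt (ab * lam ℓ / lamt ℓ) ≤ Real.sqrt 1 := Real.sqrt_le_sqrt h1
      _ = 1 := Real.sqrt_one
  have hS0 : 0 ≤ S := hS ▸ Finset.sum_nonneg fun ℓ _ =>
    mul_nonneg (hlam ℓ).le (sq_nonneg _)
  -- Part 1
  have part1 : S = ∑ ℓ, (lam ℓ / lamt ℓ) *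
      (Real.sqrt (lamt ℓ) - Real.sqrt (ab * lam ℓ)) ^ 2 := by
    rw [hS]
    refine Finset.sum_congr rfl fun ℓ _ => ?_
    have hce : c ℓ = Real.sqrt (ab * lam ℓ) / Real.sqrt (lamt ℓ) := by
      rw [hc, Real.sqrt_div (mul_nonneg hab0.le (hlam ℓ).le)]
    have hst : Real.sqrt (lamt ℓ) ^ 2 = lamt ℓ := Real.sq_sqrt (hlt ℓ).le
    have hst0 : 0 < Real.sqrt (lamt ℓ) := Real.sqrt_pos.mpr (hlt ℓ)
    have h1 : 1 - c ℓ = (Real.sqrt (lamt ℓ) - Real.sqrt (ab * lam ℓ)) / Real.sqrt (lamt ℓ) := by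
      rw [hce]; field_simp
    rw [h1, div_pow, hst]
    field_simp
  -- the constant
  set K := ∑ ℓ, (1 - ab) * lam ℓ / lamt ℓ with hK
  -- feasible point for P < S
  have memlt : P < S → ∃ f : Fin d → ℝ, (∀ ℓ, 0 ≤ f ℓ) ∧
      (∑ ℓ, lam ℓ * (1 - f ℓ) ^ 2) ≤ P ∧
      (∑ ℓ, lam ℓ * (f ℓ - c ℓ) ^ 2) = (Real.sqrt S - Real.sqrt P) ^ 2 := by
    intro hPS
    have hSpos : 0 < S := lt_of_le_of_lt hP hPS
    have hsS : 0 < Real.sqrt S := Real.sqrt_pos.mpr hSpos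
    have hsS2 : Real.sqrt S ^ 2 = S := Real.sq_sqrt hS0
    have hsP2 : Real.sqrt P ^ 2 = P := Real.sq_sqrt hP
    set t := Real.sqrt P / Real.sqrt S with ht
    have ht0 : 0 ≤ t := by positivity
    have ht1 : t ≤ 1 := by
      rw [ht, div_le_one hsS]
      exact Real.sqrt_le_sqrt hPS.le
    have ht2S : t ^ 2 * S = P := by
      rw [ht, div_pow, hsS2, hsP2]; field_simp
    have htS : (1 - t) ^ 2 * S = (Real.sqrt S - Real.sqrt P) ^ 2 := by
      have : (1 - t) * Real.sqrt S = Real.sqrt S - Real.sqrt P := by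
        rw [ht]; field_simp
      nlinarith
    refine ⟨fun ℓ => 1 - t * (1 - c ℓ), fun ℓ => ?_, ?_, ?_⟩
    · show (0:ℝ) ≤ 1 - t * (1 - c ℓ)
      nlinarith [hc0 ℓ, hc1 ℓ]
    · have h1 : (∑ ℓ, lam ℓ * (1 - (1 - t * (1 - c ℓ))) ^ 2)
          = t ^ 2 * ∑ ℓ, lam ℓ * (1 - c ℓ) ^ 2 := by
        rw [Finset.mul_sum]
        exact Finset.sum_congr rfl fun ℓ _ => by ring
      calc (∑ ℓ, lam ℓ * (1 - (1 - t * (1 - c ℓ))) ^ 2)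
          = t ^ 2 * S := by rw [h1, ← hS]
        _ = P := ht2S
        _ ≤ P := le_refl _
    · have h1 : (∑ ℓ, lam ℓ * ((1 - t * (1 - c ℓ)) - c ℓ) ^ 2)
          = (1 - t) ^ 2 * ∑ ℓ, lam ℓ * (1 - c ℓ) ^ 2 := by
        rw [Finset.mul_sum]
        exact Finset.sum_congr rfl fun ℓ _ => by ring
      rw [h1, ← hS, htS]
  -- feasible point for S ≤ P
  have memge : S ≤ P → ∃ f : Fin d → ℝ, (∀ ℓ, 0 ≤ f ℓ) ∧
      (∑ ℓ, lam ℓ * (1 - f ℓ) ^ 2) ≤ P ∧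
      (∑ ℓ, lam ℓ * (f ℓ - c ℓ) ^ 2) = 0 := by
    intro hSP
    refine ⟨c, hc0, by rw [← hS]; exact hSP, ?_⟩
    simp
  refine ⟨part1, ?_, ?_, ?_, ?_⟩
  · intro hPS
    obtain ⟨f, hf0, hfc, hfv⟩ := memlt hPS
    constructor
    · exact ⟨f, hf0, hfc, hfv.symm⟩
    · rintro y ⟨g, hg0, hgc, rfl⟩
      exact aux_lb d lam c g hlam P S hP hPS.le hS hgc
  · intro hSP
    obtain ⟨f, hf0, hfc, hfv⟩ := memge hSP
    constructor
    · exact ⟨f, hf0, hfc, hfv.symm⟩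
    · rintro y ⟨g, hg0, hgc, rfl⟩
      exact Finset.sum_nonneg fun ℓ _ => mul_nonneg (hlam ℓ).le (sq_nonneg _)
  · intro hPS
    obtain ⟨f, hf0, hfc, hfv⟩ := memlt hPS
    constructor
    · exact ⟨f, hf0, hfc, by rw [hfv]⟩
    · rintro y ⟨g, hg0, hgc, rfl⟩
      have := aux_lb d lam c g hlam P S hP hPS.le hS hgc
      linarith
  · intro hSP
    obtain ⟨f, hf0, hfc, hfv⟩ := memge hSP
    constructor
    · exact ⟨f, hf0, hfc, by rw [hfv, zero_add]⟩
    · rintro y ⟨g, hg0, hgc, rfl⟩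
      have : (0:ℝ) ≤ ∑ ℓ, lam ℓ * (g ℓ - c ℓ) ^ 2 :=
        Finset.sum_nonneg fun ℓ _ => mul_nonneg (hlam ℓ).le (sq_nonneg _)
      linarith
end

section
/- Let d ≥ 1, ᾱ ∈ (0,1), and λ_1, …, λ_d > 0; set λ_ℓ^{(t)} = ᾱ λ_ℓ + (1 − ᾱ), c_ℓ = √( ᾱ λ_ℓ / λ_ℓ^{(t)} ) ∈ (0,1), and S = ∑_{ℓ=1}^{d} λ_ℓ (1 − c_ℓ)². Assume 0 ≤ P ≤ S with S > 0, and define f_ℓ = 1 − (1 − c_ℓ) √P / √S for each ℓ. Then: (i) c_ℓ ≤ f_ℓ ≤ 1 for every ℓ; (ii) ∑_{ℓ=1}^{d} λ_ℓ (1 − f_ℓ)² = P; and (iii) ∑_{ℓ=1}^{d} λ_ℓ ( f_ℓ − c_ℓ )² = ( √S − √P )². (Hence per-dimension score-scaled decoders with these product factors f_ℓ achieve the optimal multivariate Gaussian distortion–perception tradeoff: total perception exactly P and excess distortion exactly (√S − √P)².) -/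
/-- Achievability of the optimal multivariate Gaussian distortion–perception tradeoff:
with `f_ℓ = 1 − (1 − c_ℓ)√P/√S` one has `c_ℓ ≤ f_ℓ ≤ 1`, the total perception is exactly
`P`, and the excess distortion is exactly `(√S − √P)²`. -/
theorem stmt_13 (d : ℕ) (hd : 1 ≤ d) (ab P : ℝ) (hab : ab ∈ Set.Ioo (0:ℝ) 1)
    (lam : Fin d → ℝ) (hlam : ∀ ℓ, 0 < lam ℓ)
    (lamt : Fin d → ℝ) (hlamt : ∀ ℓ, lamt ℓ = ab * lam ℓ + (1 - ab))
    (c : Fin d → ℝ) (hc : ∀ ℓ, c ℓ = Real.sqrt (ab * lam ℓ / lamt ℓ))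
    (S : ℝ) (hS : S = ∑ ℓ, lam ℓ * (1 - c ℓ) ^ 2) (hSpos : 0 < S)
    (hP0 : 0 ≤ P) (hPS : P ≤ S)
    (f : Fin d → ℝ)
    (hf : ∀ ℓ, f ℓ = 1 - (1 - c ℓ) * Real.sqrt P / Real.sqrt S) :
    (∀ ℓ, c ℓ ≤ f ℓ ∧ f ℓ ≤ 1) ∧
    (∑ ℓ, lam ℓ * (1 - f ℓ) ^ 2) = P ∧
    (∑ ℓ, lam ℓ * (f ℓ - c ℓ) ^ 2) = (Real.sqrt S - Real.sqrt P) ^ 2 := by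
  obtain ⟨hab0, hab1⟩ := hab
  have hsS : 0 < Real.sqrt S := Real.sqrt_pos.mpr hSpos
  have hc1 : ∀ ℓ, c ℓ ≤ 1 := by
    intro ℓ
    rw [hc ℓ]
    have hlt : 0 < lamt ℓ := by rw [hlamt]; nlinarith [hlam ℓ]
    have hle : ab * lam ℓ / lamt ℓ ≤ 1 := by
      rw [div_le_one hlt, hlamt]; nlinarith
    calc Real.sqrt (ab * lam ℓ / lamt ℓ) ≤ Real.sqrt 1 := Real.sqrt_le_sqrt hle
      _ = 1 := Real.sqrt_one
  have hPle : Real.sqrt P ≤ Real.sqrt S := Real.sqrt_le_sqrt hPS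
  have hratio : Real.sqrt P / Real.sqrt S ≤ 1 := div_le_one_of_le₀ hPle hsS.le
  have hratio0 : 0 ≤ Real.sqrt P / Real.sqrt S := by positivity
  refine ⟨?_, ?_, ?_⟩
  · intro ℓ
    have h1c : 0 ≤ 1 - c ℓ := by linarith [hc1 ℓ]
    rw [hf ℓ, mul_div_assoc]
    constructor
    · nlinarith
    · nlinarith
  · have key : ∀ ℓ, lam ℓ * (1 - f ℓ)^2 = lam ℓ * (1 - c ℓ)^2 * (Real.sqrt P / Real.sqrt S)^2 := by
      intro ℓ; rw [hf ℓ]; ring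
    rw [Finset.sum_congr rfl (fun ℓ _ => key ℓ), ← Finset.sum_mul, ← hS,
      div_pow, Real.sq_sqrt hP0, Real.sq_sqrt hSpos.le]
    field_simp
  · have key : ∀ ℓ, lam ℓ * (f ℓ - c ℓ)^2 = lam ℓ * (1 - c ℓ)^2 * (1 - Real.sqrt P / Real.sqrt S)^2 := by
      intro ℓ; rw [hf ℓ]; ring
    rw [Finset.sum_congr rfl (fun ℓ _ => key ℓ), ← Finset.sum_mul, ← hS]
    have h2 : 1 - Real.sqrt P / Real.sqrt S = (Real.sqrt S - Real.sqrt P) / Real.sqrt S := by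
      field_simp
    rw [h2, div_pow, Real.sq_sqrt hSpos.le, mul_comm, div_mul_cancel₀ _ hSpos.ne']
end

section
/- Let σ0 > 0, ᾱ ∈ (0,1), σ_t = √(ᾱ σ0² + (1 − ᾱ)), c = √ᾱ σ0/σ_t, and let f ∈ (c, 1]. Define D = σ0² ( f − c )² + σ0² (1 − c²) and √P = σ0 (1 − f). Then σ0² (σ0 − √P)² − ( σ0² + (σ0 − √P)² − D )² / 4 = σ0⁴ f² (1 − c²) > 0, and consequently (1/2) log ( σ0² (σ0 − √P)² / ( σ0² (σ0 − √P)² − ( σ0² + (σ0 − √P)² − D )² / 4 ) ) = (1/2) log ( 1 + ᾱ σ0² / (1 − ᾱ) ). (That is, the rate-distortion-perception function of the scalar Gaussian source, evaluated at the distortion–perception pair (D_t^ρ, P_t^ρ) achieved by the score-scaled PF-ODE decoder with product factor f, equals the mutual information (1/2) log(1 + ᾱ_t σ0²/(1 − ᾱ_t)) of the AWGN observation channel.) -/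
open Real

/-- With `√P = σ0 (1 - f)` we have `σ0 - √P = σ0 f`, and the quadratic term collapses to
`(σ0² · 2 f c)² / 4`. -/
theorem rdp_denominator_eq_of_productFactor (σ0 f c : ℝ) :
    σ0 ^ 2 * (σ0 - σ0 * (1 - f)) ^ 2
        - (σ0 ^ 2 + (σ0 - σ0 * (1 - f)) ^ 2
          - (σ0 ^ 2 * (f - c) ^ 2 + σ0 ^ 2 * (1 - c ^ 2))) ^ 2 / 4
      = σ0 ^ 4 * f ^ 2 * (1 - c ^ 2) := by
  ring

theorem one_sub_sq_sqrt_mul_div_sqrt {ab s : ℝ} (hab : 0 ≤ ab)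
    (hvar : 0 < ab * s ^ 2 + (1 - ab)) :
    1 - (√ab * s / √(ab * s ^ 2 + (1 - ab))) ^ 2 = (1 - ab) / (ab * s ^ 2 + (1 - ab)) := by
  rw [div_pow, mul_pow, sq_sqrt hab, sq_sqrt hvar.le]
  field_simp
  ring

theorem one_add_snr_eq_div (ab s : ℝ) (hab : ab ≠ 1) :
    1 + ab * s ^ 2 / (1 - ab) = (ab * s ^ 2 + (1 - ab)) / (1 - ab) := by
  field_simp [sub_ne_zero.mpr hab.symm]
  ring

/-- The scalar Gaussian rate-distortion-perception function evaluated at the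
distortion–perception pair achieved by the score-scaled PF-ODE decoder with product
factor `f` equals the mutual information `(1/2) log(1 + ᾱ σ0²/(1−ᾱ))` of the AWGN
observation channel. -/
theorem stmt_14 (σ0 ab f : ℝ) (hσ0 : 0 < σ0) (hab : ab ∈ Set.Ioo (0:ℝ) 1)
    (σt : ℝ) (hσt : σt = Real.sqrt (ab * σ0 ^ 2 + (1 - ab)))
    (c : ℝ) (hc : c = Real.sqrt ab * σ0 / σt)
    (hf : f ∈ Set.Ioc c 1)
    (D : ℝ) (hD : D = σ0 ^ 2 * (f - c) ^ 2 + σ0 ^ 2 * (1 - c ^ 2))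
    (sP : ℝ) (hsP : sP = σ0 * (1 - f)) :
    σ0 ^ 2 * (σ0 - sP) ^ 2 - (σ0 ^ 2 + (σ0 - sP) ^ 2 - D) ^ 2 / 4
        = σ0 ^ 4 * f ^ 2 * (1 - c ^ 2) ∧
    0 < σ0 ^ 4 * f ^ 2 * (1 - c ^ 2) ∧
    (1/2) * Real.log (σ0 ^ 2 * (σ0 - sP) ^ 2 /
        (σ0 ^ 2 * (σ0 - sP) ^ 2 - (σ0 ^ 2 + (σ0 - sP) ^ 2 - D) ^ 2 / 4))
      = (1/2) * Real.log (1 + ab * σ0 ^ 2 / (1 - ab)) := by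
  obtain ⟨hab0, hab1⟩ := hab
  subst hσt hD hsP
  have hvar : 0 < ab * σ0 ^ 2 + (1 - ab) := by nlinarith
  have h1c : 1 - c ^ 2 = (1 - ab) / (ab * σ0 ^ 2 + (1 - ab)) :=
    hc ▸ one_sub_sq_sqrt_mul_div_sqrt hab0.le hvar
  have hf0 : 0 < f := (hc ▸ by positivity : 0 ≤ c).trans_lt hf.1
  have h1c_pos : 0 < 1 - c ^ 2 := h1c ▸ div_pos (by linarith) hvar
  rw [rdp_denominator_eq_of_productFactor]
  refine ⟨rfl, by positivity, ?_⟩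
  have hsignal : σ0 ^ 2 * (σ0 - σ0 * (1 - f)) ^ 2 = σ0 ^ 4 * f ^ 2 * 1 := by ring
  rw [hsignal, mul_div_mul_left _ _ (by positivity), h1c, one_div_div,
    one_add_snr_eq_div _ _ hab1.ne]
end
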